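/- Let X and Y be Banach spaces over the scalar field 𝕂 (real or complex), let 0 < p < ∞, and let T : X → Y be a linear operator. Then T is absolutely p-summing, i.e. there is a constant C₁ > 0 with ∑_{j=1}^m ‖T(x_j)‖^p ≤ C₁ · sup_{φ ∈ B_{X'}} ∑_{j=1}^m |φ(x_j)|^p for all m ∈ ℕ and x₁,…,x_m ∈ X, if and only if there exist a constant C > 0 and a regular Borel probability measure μ on the closed unit ball B_{X'} of the dual space X' equipped with the weak-star topology such that ‖T(x)‖ ≤ C · (∫_{B_{X'}} |φ(x)|^p dμ(φ))^{1/p} for all x ∈ X. -/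

import Mathlib

set_option linter.unusedSectionVars false
set_option linter.unusedVariables false
set_option maxHeartbeats 1000000

open MeasureTheory Set
open scoped ENNReal NNReal

section RMKLite


variable {K : Type*} [TopologicalSpace K] [CompactSpace K] [T2Space K]
    [MeasurableSpace K] [BorelSpace K]

theorem integrable_cm (μ : Measure K) [IsFiniteMeasure μ] (f : C(K, ℝ)) :
    Integrable (fun z => f z) μ := by
  refine ⟨f.continuous.aestronglyMeasurable, ?_⟩
  apply MeasureTheory.HasFiniteIntegral.of_bounded (C := ‖f‖)
  filter_upwards with z using f.norm_coe_le_norm z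

namespace PietschAux

variable (Λ : C(K, ℝ) →L[ℝ] ℝ)

/-- test functions for a set -/
def tests (S : Set K) : Set C(K, ℝ) := {f | (∀ z, 0 ≤ f z) ∧ ∀ z ∈ S, 1 ≤ f z}

/-- the "outer content" of a set -/
noncomputable def nu (S : Set K) : ℝ := sInf (Λ '' tests S)

theorem Λmono (hpos : ∀ f : C(K, ℝ), (∀ z, 0 ≤ f z) → 0 ≤ Λ f)
    {f g : C(K, ℝ)} (h : ∀ z, f z ≤ g z) : Λ f ≤ Λ g := by
  have := hpos (g - f) (fun z => by simpa using h z)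
  have : 0 ≤ Λ g - Λ f := by simpa using this
  linarith

theorem one_mem_tests (S : Set K) : (1 : C(K, ℝ)) ∈ tests S :=
  ⟨fun z => zero_le_one, fun z _ => le_refl _⟩

theorem tests_nonempty (S : Set K) : (Λ '' tests S).Nonempty :=
  ⟨Λ 1, 1, one_mem_tests S, rfl⟩

variable (hpos : ∀ f : C(K, ℝ), (∀ z, 0 ≤ f z) → 0 ≤ Λ f)
include hpos

theorem tests_bddBelow (S : Set K) : BddBelow (Λ '' tests S) := by
  refine ⟨0, ?_⟩
  rintro b ⟨f, hf, rfl⟩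
  exact hpos f hf.1

theorem nu_nonneg (S : Set K) : 0 ≤ nu Λ S :=
  le_csInf (tests_nonempty Λ S) (by rintro b ⟨f, hf, rfl⟩; exact hpos f hf.1)

theorem nu_le (S : Set K) {f : C(K, ℝ)} (hf : f ∈ tests S) : nu Λ S ≤ Λ f :=
  csInf_le (tests_bddBelow Λ hpos S) ⟨f, hf, rfl⟩

theorem nu_mono {S₁ S₂ : Set K} (h : S₁ ⊆ S₂) : nu Λ S₁ ≤ nu Λ S₂ := by
  apply le_csInf (tests_nonempty Λ S₂)
  rintro b ⟨f, hf, rfl⟩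
  exact nu_le Λ hpos S₁ ⟨hf.1, fun z hz => hf.2 z (h hz)⟩

theorem nu_union_le (S₁ S₂ : Set K) : nu Λ (S₁ ∪ S₂) ≤ nu Λ S₁ + nu Λ S₂ := by
  apply le_of_forall_pos_le_add
  intro ε hε
  obtain ⟨b₁, ⟨f₁, hf₁, rfl⟩, h₁⟩ := exists_lt_of_csInf_lt (tests_nonempty Λ S₁)
    (lt_add_of_pos_right (nu Λ S₁) (half_pos hε))
  obtain ⟨b₂, ⟨f₂, hf₂, rfl⟩, h₂⟩ := exists_lt_of_csInf_lt (tests_nonempty Λ S₂)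
    (lt_add_of_pos_right (nu Λ S₂) (half_pos hε))
  have : nu Λ (S₁ ∪ S₂) ≤ Λ (f₁ + f₂) := by
    apply nu_le Λ hpos
    constructor
    · intro z; simpa using add_nonneg (hf₁.1 z) (hf₂.1 z)
    · rintro z (hz | hz)
      · simpa using le_add_of_le_of_nonneg (hf₁.2 z hz) (hf₂.1 z)
      · simpa using le_add_of_nonneg_of_le (hf₁.1 z) (hf₂.2 z hz)
  rw [map_add] at this
  linarith

theorem nu_union_disjoint {S₁ S₂ : Set K} (h : Disjoint S₁ S₂)
    (h₁ : IsClosed S₁) (h₂ : IsClosed S₂) :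
    nu Λ (S₁ ∪ S₂) = nu Λ S₁ + nu Λ S₂ := by
  refine le_antisymm (nu_union_le Λ hpos S₁ S₂) ?_
  obtain ⟨u, hu0, hu1, hu01⟩ := exists_continuous_zero_one_of_isClosed h₂ h₁ h.symm
  apply le_csInf (tests_nonempty Λ _)
  rintro b ⟨f, hf, rfl⟩
  have hA : nu Λ S₁ ≤ Λ (f * u) := by
    apply nu_le Λ hpos
    constructor
    · intro z; exact mul_nonneg (hf.1 z) (hu01 z).1
    · intro z hz
      have : u z = 1 := hu1 hz
      have : (f * u) z = f z := by simp [this]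
      rw [this]
      exact hf.2 z (Or.inl hz)
  have hB : nu Λ S₂ ≤ Λ (f * (1 - u)) := by
    apply nu_le Λ hpos
    constructor
    · intro z
      have := (hu01 z).2
      simp only [ContinuousMap.mul_apply, ContinuousMap.sub_apply, ContinuousMap.one_apply]
      exact mul_nonneg (hf.1 z) (by linarith)
    · intro z hz
      have hu : u z = 0 := hu0 hz
      have : (f * (1 - u)) z = f z := by simp [hu]
      rw [this]
      exact hf.2 z (Or.inr hz)
  have : f * u + f * (1 - u) = f := by ring
  calc nu Λ S₁ + nu Λ S₂ ≤ Λ (f * u) + Λ (f * (1 - u)) := add_le_add hA hB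
    _ = Λ (f * u + f * (1 - u)) := (map_add Λ _ _).symm
    _ = Λ f := by rw [this]

/-- The content associated to `Λ`. -/
noncomputable def content (hpos : ∀ f : C(K, ℝ), (∀ z, 0 ≤ f z) → 0 ≤ Λ f) : Content K where
  toFun S := (nu Λ S).toNNReal
  mono' S₁ S₂ h := Real.toNNReal_mono (nu_mono Λ hpos h)
  sup_disjoint' S₁ S₂ h h₁ h₂ := by
    simp only [TopologicalSpace.Compacts.coe_sup]
    rw [nu_union_disjoint Λ hpos h h₁ h₂,
      Real.toNNReal_add (nu_nonneg Λ hpos _) (nu_nonneg Λ hpos _)]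
  sup_le' S₁ S₂ := by
    simp only [TopologicalSpace.Compacts.coe_sup]
    refine le_trans (Real.toNNReal_mono (nu_union_le Λ hpos S₁ S₂)) ?_
    exact Real.toNNReal_add_le


theorem nu_univ_eq : nu Λ (univ : Set K) = Λ 1 := by
  refine le_antisymm (nu_le Λ hpos _ (one_mem_tests _)) ?_
  apply le_csInf (tests_nonempty Λ _)
  rintro b ⟨f, hf, rfl⟩
  exact Λmono Λ hpos fun z => by simpa using hf.2 z (mem_univ z)

theorem content_measure_univ (hone : Λ 1 = 1) :
    (content Λ hpos).measure (univ : Set K) = 1 := by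
  rw [(content Λ hpos).measure_apply MeasurableSet.univ,
    (content Λ hpos).outerMeasure_of_isOpen univ isOpen_univ]
  have h1 : (content Λ hpos).innerContent ⟨univ, isOpen_univ⟩ =
      (content Λ hpos) ⟨univ, isCompact_univ⟩ := by
    refine le_antisymm ?_ ((content Λ hpos).le_innerContent _ _ (subset_univ _))
    refine iSup₂_le fun L hL => (content Λ hpos).mono _ _ (subset_univ _)
  rw [h1]
  have : nu Λ (univ : Set K) = 1 := by rw [nu_univ_eq Λ hpos, hone]
  simp [Content.mk_apply, content, this]

theorem main (hone : Λ 1 = 1) :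
    ∃ μ : Measure K, μ.Regular ∧ IsProbabilityMeasure μ ∧
      ∀ f : C(K, ℝ), (∀ z, 0 ≤ f z) → Λ f ≤ ∫ z, f z ∂μ := by
  set μ := (content Λ hpos).measure with hμ
  have hreg : μ.Regular := inferInstance
  have hprob : IsProbabilityMeasure μ := ⟨content_measure_univ Λ hpos hone⟩
  refine ⟨μ, hreg, hprob, ?_⟩
  intro f hf
  -- `nu` is dominated by the measure on closed sets
  have hclosed : ∀ {S : Set K}, IsClosed S → nu Λ S ≤ (μ S).toReal := by
    intro S hS
    have h1 : ((nu Λ S).toNNReal : ℝ≥0∞) ≤ μ S := by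
      rw [hμ, Content.measure_apply _ hS.measurableSet]
      exact (content Λ hpos).le_outerMeasure_compacts ⟨S, hS.isCompact⟩
    calc nu Λ S = ((nu Λ S).toNNReal : ℝ≥0∞).toReal := by
          simp [Real.coe_toNNReal _ (nu_nonneg Λ hpos S)]
      _ ≤ (μ S).toReal := ENNReal.toReal_mono (measure_ne_top μ S) h1
  -- the main estimate for every `n`
  have key : ∀ n : ℕ, 0 < n → Λ f ≤ (‖f‖ + 1) / n + ∫ z, f z ∂μ := by
    intro n hn
    set δ : ℝ := (‖f‖ + 1) / n with hδdef
    have hδ : 0 < δ := by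
      apply div_pos (by positivity)
      exact_mod_cast hn
    have hnδ : (n : ℝ) * δ = ‖f‖ + 1 := by
      rw [hδdef]; field_simp
    set E : ℕ → Set K := fun i => {z | (i : ℝ) * δ ≤ f z} with hE
    have hEclosed : ∀ i, IsClosed (E i) := fun i =>
      isClosed_le continuous_const f.continuous
    set g : ℕ → C(K, ℝ) := fun i =>
      ⟨fun z => min (f z) (((i : ℝ) + 1) * δ) - min (f z) ((i : ℝ) * δ), by
        apply Continuous.sub <;> exact (map_continuous f).min continuous_const⟩ with hg
    have hg_apply : ∀ i z, g i z =
        min (f z) (((i : ℝ) + 1) * δ) - min (f z) ((i : ℝ) * δ) := fun i z => rfl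
    have hstep : ∀ (i : ℕ) (z : K), ((i : ℝ)) * δ ≤ ((i : ℝ) + 1) * δ := by
      intro i z; nlinarith [hδ.le]
    have hg_nonneg : ∀ i z, 0 ≤ g i z := by
      intro i z
      rw [hg_apply, sub_nonneg]
      exact min_le_min le_rfl (hstep i z)
    have hg_le : ∀ i z, g i z ≤ δ := by
      intro i z
      rw [hg_apply, sub_le_iff_le_add']
      calc min (f z) (((i : ℝ) + 1) * δ) ≤ min (f z + δ) ((i : ℝ) * δ + δ) :=
            min_le_min (le_add_of_nonneg_right hδ.le) (by nlinarith)
        _ = min (f z) ((i : ℝ) * δ) + δ := by rw [min_add_add_right]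
    have hg_zero : ∀ i z, z ∉ E i → g i z = 0 := by
      intro i z hz
      simp only [hE, mem_setOf_eq, not_le] at hz
      rw [hg_apply, min_eq_left (by nlinarith), min_eq_left hz.le, sub_self]
    have hg_delta : ∀ i z, z ∈ E (i + 1) → g i z = δ := by
      intro i z hz
      simp only [hE, mem_setOf_eq] at hz
      push_cast at hz
      rw [hg_apply, min_eq_right (by nlinarith), min_eq_right (by nlinarith)]
      ring
    have hg_sum : ∀ z, ∑ i ∈ Finset.range n, g i z = f z := by
      intro z
      have := Finset.sum_range_sub (fun i => min (f z) ((i : ℝ) * δ)) n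
      push_cast at this
      simp only [hg_apply]
      rw [this]
      have h1 : min (f z) ((0 : ℝ) * δ) = 0 := by
        rw [zero_mul, min_eq_right (hf z)]
      have h2 : min (f z) ((n : ℝ) * δ) = f z := by
        apply min_eq_left
        rw [hnδ]
        have := f.norm_coe_le_norm z
        have := le_abs_self (f z)
        simp only [Real.norm_eq_abs] at *
        linarith
      rw [h1, h2, sub_zero]
    have hfeq : f = ∑ i ∈ Finset.range n, g i := by
      ext z
      rw [ContinuousMap.coe_sum]
      simpa using (hg_sum z).symm
    -- upper bound for each slice
    have step2 : ∀ i, Λ (g i) ≤ δ * (μ (E i)).toReal := by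
      intro i
      have h1 : Λ (g i) ≤ δ * nu Λ (E i) := by
        have h2 : Λ (g i) / δ ≤ nu Λ (E i) := by
          apply le_csInf (tests_nonempty Λ _)
          rintro b ⟨h, hh, rfl⟩
          rw [div_le_iff₀ hδ]
          have : Λ (g i) ≤ Λ (δ • h) := by
            apply Λmono Λ hpos
            intro z
            by_cases hz : z ∈ E i
            · have := hh.2 z hz
              have hgl := hg_le i z
              simp only [ContinuousMap.smul_apply, smul_eq_mul]
              nlinarith
            · rw [hg_zero i z hz]
              simp only [ContinuousMap.smul_apply, smul_eq_mul]
              exact mul_nonneg hδ.le (hh.1 z)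
          rw [Λ.map_smul, smul_eq_mul] at this
          linarith
        calc Λ (g i) = δ * (Λ (g i) / δ) := by field_simp
          _ ≤ δ * nu Λ (E i) := by
            exact mul_le_mul_of_nonneg_left h2 hδ.le
      exact h1.trans (mul_le_mul_of_nonneg_left (hclosed (hEclosed i)) hδ.le)
    -- lower bound for the integral
    have step3 : ∑ i ∈ Finset.range n, δ * (μ (E (i + 1))).toReal ≤ ∫ z, f z ∂μ := by
      have hind : ∀ i : ℕ, Integrable ((E (i + 1)).indicator (fun _ => δ)) μ :=
        fun i => (integrable_const δ).indicator (hEclosed (i + 1)).measurableSet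
      have hintf : Integrable (fun z => f z) μ := integrable_cm μ f
      have hle : ∀ z, ∑ i ∈ Finset.range n, (E (i + 1)).indicator (fun _ => δ) z ≤ f z := by
        intro z
        rw [← hg_sum z]
        apply Finset.sum_le_sum
        intro i _
        by_cases hz : z ∈ E (i + 1)
        · rw [indicator_of_mem hz, hg_delta i z hz]
        · rw [indicator_of_notMem hz]
          exact hg_nonneg i z
      calc ∑ i ∈ Finset.range n, δ * (μ (E (i + 1))).toReal
          = ∫ z, ∑ i ∈ Finset.range n, (E (i + 1)).indicator (fun _ => δ) z ∂μ := by
            rw [integral_finset_sum _ fun i _ => hind i]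
            congr 1
            ext i
            rw [integral_indicator_const _ (hEclosed (i + 1)).measurableSet]
            rw [smul_eq_mul, measureReal_def]; ring
        _ ≤ ∫ z, f z ∂μ := by
            apply integral_mono (integrable_finset_sum _ fun i _ => hind i) hintf hle
    -- combine
    have hμle1 : ∀ S : Set K, (μ S).toReal ≤ 1 := by
      intro S
      have := measure_mono (subset_univ S) (μ := μ)
      rw [measure_univ] at this
      calc (μ S).toReal ≤ (1 : ℝ≥0∞).toReal := ENNReal.toReal_mono ENNReal.one_ne_top this
        _ = 1 := by simp
    obtain ⟨m, rfl⟩ := Nat.exists_eq_succ_of_ne_zero hn.ne'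
    calc Λ f = ∑ i ∈ Finset.range (m + 1), Λ (g i) := by
          rw [hfeq, map_sum]
      _ ≤ ∑ i ∈ Finset.range (m + 1), δ * (μ (E i)).toReal :=
          Finset.sum_le_sum fun i _ => step2 i
      _ = ∑ i ∈ Finset.range m, δ * (μ (E (i + 1))).toReal + δ * (μ (E 0)).toReal :=
          Finset.sum_range_succ' _ m
      _ ≤ ∑ i ∈ Finset.range (m + 1), δ * (μ (E (i + 1))).toReal + δ * 1 := by
          gcongr
          · exact Nat.le_succ m
          · exact hμle1 _
      _ ≤ ∫ z, f z ∂μ + δ := by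
          rw [mul_one]
          gcongr
      _ = (‖f‖ + 1) / (m + 1 : ℕ) + ∫ z, f z ∂μ := by rw [add_comm, hδdef]
  -- let `n → ∞`
  apply le_of_forall_pos_le_add
  intro ε hε
  obtain ⟨n, hn⟩ := exists_nat_gt ((‖f‖ + 1) / ε)
  have hn0 : 0 < n := by
    by_contra h
    push_neg at h
    interval_cases n
    simp only [Nat.cast_zero] at hn
    have : 0 < (‖f‖ + 1) / ε := by positivity
    linarith
  have hδε : (‖f‖ + 1) / n < ε := by
    rw [div_lt_iff₀ (by exact_mod_cast hn0)]
    rw [div_lt_iff₀ hε] at hn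
    linarith
  have := key n hn0
  linarith [this]

end PietschAux

end RMKLite

open MeasureTheory

/-- The closed unit ball of the dual of `X`, equipped with the weak-star topology. -/
noncomputable def dualBall (𝕜 X : Type*) [RCLike 𝕜] [NormedAddCommGroup X]
    [NormedSpace 𝕜 X] : Set (WeakDual 𝕜 X) :=
  {φ | ‖WeakDual.toStrongDual φ‖ ≤ 1}

noncomputable instance (𝕜 X : Type*) [RCLike 𝕜] [NormedAddCommGroup X] [NormedSpace 𝕜 X] :
    MeasurableSpace (dualBall 𝕜 X) := borel _

instance (𝕜 X : Type*) [RCLike 𝕜] [NormedAddCommGroup X] [NormedSpace 𝕜 X] :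
    BorelSpace (dualBall 𝕜 X) := ⟨rfl⟩

section BallInstances

variable {𝕜 X : Type*} [RCLike 𝕜] [NormedAddCommGroup X] [NormedSpace 𝕜 X]

theorem dualBall_isCompact : IsCompact (dualBall 𝕜 X) := by
  have h : dualBall 𝕜 X = WeakDual.toStrongDual ⁻¹' Metric.closedBall 0 1 := by
    ext φ
    simp [dualBall, Metric.mem_closedBall, dist_zero_right]
  rw [h]
  exact WeakDual.isCompact_closedBall 0 1

instance : CompactSpace (dualBall 𝕜 X) := isCompact_iff_compactSpace.mp dualBall_isCompact

instance : Nonempty (dualBall 𝕜 X) := ⟨⟨0, by simp [dualBall]⟩⟩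

/-- Evaluation of the `p`-th power of the norm at `x`, as a continuous map on the dual ball. -/
noncomputable def evalCM (p : ℝ) (hp : 0 < p) (x : X) : C(dualBall 𝕜 X, ℝ) :=
  ⟨fun φ => ‖(φ : WeakDual 𝕜 X) x‖ ^ p, by
    apply Continuous.rpow_const
    · exact ((WeakDual.eval_continuous x).comp continuous_subtype_val).norm
    · exact fun _ => Or.inr hp.le⟩

theorem evalCM_apply (p : ℝ) (hp : 0 < p) (x : X) (φ : dualBall 𝕜 X) :
    evalCM p hp x φ = ‖(φ : WeakDual 𝕜 X) x‖ ^ p := rfl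

theorem evalCM_nonneg (p : ℝ) (hp : 0 < p) (x : X) (φ : dualBall 𝕜 X) :
    0 ≤ evalCM p hp x φ := Real.rpow_nonneg (norm_nonneg _) p

theorem norm_eval_le_norm (x : X) (φ : dualBall 𝕜 X) :
    ‖(φ : WeakDual 𝕜 X) x‖ ≤ ‖x‖ := by
  have h1 : ‖WeakDual.toStrongDual (φ : WeakDual 𝕜 X)‖ ≤ 1 := φ.2
  calc ‖(φ : WeakDual 𝕜 X) x‖ = ‖WeakDual.toStrongDual (φ : WeakDual 𝕜 X) x‖ := rfl
    _ ≤ ‖WeakDual.toStrongDual (φ : WeakDual 𝕜 X)‖ * ‖x‖ :=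
        ContinuousLinearMap.le_opNorm _ x
    _ ≤ 1 * ‖x‖ := by gcongr
    _ = ‖x‖ := one_mul _

/-- The key scaling identity for `p`-th powers of norms. -/
theorem norm_ofReal_smul_rpow {W : Type*} [SeminormedAddCommGroup W] [NormedSpace 𝕜 W]
    (p : ℝ) (hp : 0 < p) (c : ℝ) (hc : 0 ≤ c) (w : W) :
    ‖((c ^ (1 / p) : ℝ) : 𝕜) • w‖ ^ p = c * ‖w‖ ^ p := by
  rw [norm_smul, RCLike.norm_ofReal, abs_of_nonneg (Real.rpow_nonneg hc _),
    Real.mul_rpow (Real.rpow_nonneg hc _) (norm_nonneg _),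
    ← Real.rpow_mul hc, one_div_mul_cancel hp.ne', Real.rpow_one]

end BallInstances

/-- Pietsch's domination theorem for absolutely `p`-summing linear operators: a linear
operator `T : X → Y` between Banach spaces is absolutely `p`-summing if and only if it
satisfies a Pietsch domination by a regular Borel probability measure on the closed unit
ball of the dual of `X` with the weak-star topology. -/
theorem pietsch_domination_linear
    {𝕜 X Y : Type*} [RCLike 𝕜]
    [NormedAddCommGroup X] [NormedSpace 𝕜 X] [CompleteSpace X]
    [NormedAddCommGroup Y] [NormedSpace 𝕜 Y] [CompleteSpace Y]
    (p : ℝ) (hp : 0 < p) (T : X →ₗ[𝕜] Y) :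
    (∃ C₁ > 0, ∀ (m : ℕ) (x : Fin m → X),
        ∑ j, ‖T (x j)‖ ^ p ≤
          C₁ * ⨆ φ : dualBall 𝕜 X, ∑ j, ‖(φ : WeakDual 𝕜 X) (x j)‖ ^ p) ↔
    (∃ C > 0, ∃ μ : Measure (dualBall 𝕜 X), μ.Regular ∧ IsProbabilityMeasure μ ∧
        ∀ x : X, ‖T x‖ ≤ C * (∫ φ, ‖(φ : WeakDual 𝕜 X) x‖ ^ p ∂μ) ^ (1 / p)) := by
  constructor
  · -- forward direction: summing inequality implies Pietsch domination
    rintro ⟨C₁, hC₁, hsum⟩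
    set e : X → C(dualBall 𝕜 X, ℝ) := fun x => evalCM p hp x with he
    set aF : (m : ℕ) → (Fin m → X) → C(dualBall 𝕜 X, ℝ) := fun m x =>
      ∑ j, (ContinuousMap.const _ (‖T (x j)‖ ^ p) - C₁ • e (x j)) with haF
    have haF_apply : ∀ (m : ℕ) (x : Fin m → X) (φ : dualBall 𝕜 X), aF m x φ =
        ∑ j, (‖T (x j)‖ ^ p - C₁ * ‖(φ : WeakDual 𝕜 X) (x j)‖ ^ p) := by
      intro m x φ
      simp only [haF, ContinuousMap.coe_sum, Finset.sum_apply, ContinuousMap.sub_apply,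
        ContinuousMap.smul_apply, ContinuousMap.const_apply, smul_eq_mul, he, evalCM_apply]
    set A : Set C(dualBall 𝕜 X, ℝ) := {f | ∃ m, ∃ x : Fin m → X, f = aF m x} with hA
    set B : Set C(dualBall 𝕜 X, ℝ) := {f | ∀ φ, 0 < f φ} with hB
    -- B is open
    have hBopen : IsOpen B := by
      rw [Metric.isOpen_iff]
      intro f hf
      simp only [hB, mem_setOf_eq] at hf
      obtain ⟨φ₀, -, hφ₀⟩ := isCompact_univ.exists_isMinOn univ_nonempty
        f.continuous.continuousOn
      refine ⟨f φ₀, hf φ₀, ?_⟩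
      intro g hg
      simp only [hB, mem_setOf_eq]
      intro φ
      have h1 : dist (g φ) (f φ) ≤ dist g f := ContinuousMap.dist_apply_le_dist φ
      have h2 : f φ₀ ≤ f φ := hφ₀ (mem_univ φ)
      have h3 : dist g f < f φ₀ := Metric.mem_ball.1 hg
      have h4 : |g φ - f φ| ≤ dist g f := by rw [← Real.dist_eq]; exact h1
      have h5 : f φ - g φ ≤ |g φ - f φ| := by
        rw [abs_sub_comm]; exact le_abs_self _
      linarith
    -- B is convex
    have hBconvex : Convex ℝ B := by
      intro f hf g hg a b ha hb hab
      simp only [hB, mem_setOf_eq] at hf hg ⊢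
      intro φ
      simp only [ContinuousMap.add_apply, ContinuousMap.smul_apply, smul_eq_mul]
      rcases eq_or_lt_of_le ha with h | h
      · have hb1 : b = 1 := by linarith
        rw [← h, hb1]
        simpa using hg φ
      · nlinarith [hf φ, (hg φ).le, mul_nonneg hb (hg φ).le]
    -- A is closed under addition
    have hAadd : ∀ f ∈ A, ∀ g ∈ A, f + g ∈ A := by
      rintro f ⟨m, x, rfl⟩ g ⟨k, y, rfl⟩
      refine ⟨m + k, Fin.append x y, ?_⟩
      ext φ
      rw [ContinuousMap.add_apply, haF_apply, haF_apply, haF_apply, Fin.sum_univ_add]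
      congr 1
      · exact Finset.sum_congr rfl fun j _ => by rw [Fin.append_left]
      · exact Finset.sum_congr rfl fun j _ => by rw [Fin.append_right]
    -- A is closed under nonnegative scaling
    have hAsmul : ∀ f ∈ A, ∀ c : ℝ, 0 ≤ c → c • f ∈ A := by
      rintro f ⟨m, x, rfl⟩ c hc
      refine ⟨m, fun j => ((c ^ (1 / p) : ℝ) : 𝕜) • x j, ?_⟩
      ext φ
      rw [ContinuousMap.smul_apply, haF_apply, haF_apply, smul_eq_mul, Finset.mul_sum]
      apply Finset.sum_congr rfl
      intro j _
      rw [map_smul T, map_smul ((φ : WeakDual 𝕜 X)),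
        norm_ofReal_smul_rpow p hp c hc (T (x j)),
        norm_ofReal_smul_rpow p hp c hc ((φ : WeakDual 𝕜 X) (x j))]
      ring
    have hAconvex : Convex ℝ A := fun f hf g hg a b ha hb _ =>
      hAadd _ (hAsmul f hf a ha) _ (hAsmul g hg b hb)
    have h0A : (0 : C(dualBall 𝕜 X, ℝ)) ∈ A := by
      refine ⟨0, Fin.elim0, ?_⟩
      ext φ
      rw [haF_apply]
      simp
    -- A and B are disjoint thanks to the summing hypothesis
    have hdisj : Disjoint B A := by
      rw [Set.disjoint_left]
      rintro f hfB ⟨m, x, rfl⟩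
      simp only [hB, mem_setOf_eq] at hfB
      obtain ⟨φ₀, -, hφ₀⟩ := isCompact_univ.exists_isMinOn univ_nonempty
        (aF m x).continuous.continuousOn
      have hSle : (⨆ φ : dualBall 𝕜 X, ∑ j, ‖(φ : WeakDual 𝕜 X) (x j)‖ ^ p) ≤
          ((∑ j, ‖T (x j)‖ ^ p) - aF m x φ₀) / C₁ := by
        apply ciSup_le
        intro φ
        have h2 : aF m x φ₀ ≤ aF m x φ := hφ₀ (mem_univ φ)
        rw [haF_apply m x φ, Finset.sum_sub_distrib, ← Finset.mul_sum] at h2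
        rw [le_div_iff₀ hC₁]
        linarith
      have h3 := hsum m x
      have h6 := mul_le_mul_of_nonneg_left hSle hC₁.le
      rw [mul_div_cancel₀ _ hC₁.ne'] at h6
      have h5 : 0 < aF m x φ₀ := hfB φ₀
      linarith
    -- separate A and B by a continuous linear functional
    obtain ⟨L, u, hLB, hLA⟩ := geometric_hahn_banach_open hBconvex hBopen hAconvex hdisj
    have hu0 : u ≤ 0 := by simpa using hLA 0 h0A
    have h1B : (1 : C(dualBall 𝕜 X, ℝ)) ∈ B := by
      simp only [hB, mem_setOf_eq]
      intro φ
      simp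
    have hL1 : L 1 < 0 := lt_of_lt_of_le (hLB 1 h1B) hu0
    have hL1pos : 0 < -(L 1) := by linarith
    -- every element of A has nonnegative image under L
    have hLA0 : ∀ f ∈ A, 0 ≤ L f := by
      intro f hf
      by_contra hneg
      push_neg at hneg
      have hc : 0 < (u - 1) / L f := div_pos_of_neg_of_neg (by linarith) hneg
      have h7 := hLA _ (hAsmul f hf _ hc.le)
      rw [_root_.map_smul, smul_eq_mul, div_mul_cancel₀ _ hneg.ne] at h7
      linarith
    -- the normalized positive functional
    set Λ : C(dualBall 𝕜 X, ℝ) →L[ℝ] ℝ := (-(L 1))⁻¹ • (-L) with hΛdef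
    have hΛ_apply : ∀ f : C(dualBall 𝕜 X, ℝ), Λ f = (-(L 1))⁻¹ * (-(L f)) := by
      intro f
      simp [hΛdef]
    have hΛ1 : Λ (1 : C(dualBall 𝕜 X, ℝ)) = 1 := by
      rw [hΛ_apply]
      exact inv_mul_cancel₀ hL1pos.ne'
    have hΛpos : ∀ f : C(dualBall 𝕜 X, ℝ), (∀ z, 0 ≤ f z) → 0 ≤ Λ f := by
      intro f hf
      have key : ∀ ε : ℝ, 0 < ε → 0 < -(L f) + ε * (-(L 1)) := by
        intro ε hε
        have hmem : f + ε • (1 : C(dualBall 𝕜 X, ℝ)) ∈ B := by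
          simp only [hB, mem_setOf_eq]
          intro φ
          have := hf φ
          simp only [ContinuousMap.add_apply, ContinuousMap.smul_apply,
            ContinuousMap.one_apply, smul_eq_mul, mul_one]
          linarith
        have h8 := hLB _ hmem
        rw [map_add, _root_.map_smul, smul_eq_mul] at h8
        nlinarith [hu0]
      have hLf : 0 ≤ -(L f) := by
        by_contra h
        push_neg at h
        have hε : 0 < L f / (-(L 1)) := div_pos (by linarith) hL1pos
        have h9 := key _ hε
        rw [div_mul_cancel₀ _ hL1pos.ne'] at h9
        linarith
      rw [hΛ_apply]
      exact mul_nonneg (inv_nonneg.2 hL1pos.le) hLf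
    have hΛA : ∀ f ∈ A, Λ f ≤ 0 := by
      intro f hf
      rw [hΛ_apply]
      have := hLA0 f hf
      apply mul_nonpos_iff.2
      exact Or.inl ⟨inv_nonneg.2 hL1pos.le, by linarith⟩
    -- apply the Riesz-type representation
    obtain ⟨μ, hreg, hprob, hint⟩ := PietschAux.main Λ hΛpos hΛ1
    refine ⟨C₁ ^ (1 / p), Real.rpow_pos_of_pos hC₁ _, μ, hreg, hprob, ?_⟩
    intro x
    have hxA : (ContinuousMap.const _ (‖T x‖ ^ p) - C₁ • e x) ∈ A := by
      refine ⟨1, fun _ => x, ?_⟩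
      ext φ
      rw [ContinuousMap.sub_apply, haF_apply, Fin.sum_univ_one, ContinuousMap.const_apply,
        ContinuousMap.smul_apply, smul_eq_mul, he, evalCM_apply]
    have hkey : ‖T x‖ ^ p ≤ C₁ * Λ (e x) := by
      have h1 := hΛA _ hxA
      have hconst : ContinuousMap.const (dualBall 𝕜 X) (‖T x‖ ^ p) =
          (‖T x‖ ^ p) • (1 : C(dualBall 𝕜 X, ℝ)) := by
        ext φ
        simp
      rw [map_sub, hconst, _root_.map_smul, _root_.map_smul, hΛ1, smul_eq_mul, smul_eq_mul, mul_one] at h1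
      linarith
    have hIeq : Λ (e x) ≤ ∫ φ, ‖(φ : WeakDual 𝕜 X) x‖ ^ p ∂μ := by
      have h10 := hint (e x) (by intro z; rw [he]; exact evalCM_nonneg p hp x z)
      simpa only [he, evalCM_apply] using h10
    have hTp : ‖T x‖ ^ p ≤ C₁ * ∫ φ, ‖(φ : WeakDual 𝕜 X) x‖ ^ p ∂μ :=
      hkey.trans (mul_le_mul_of_nonneg_left hIeq hC₁.le)
    have hInn : 0 ≤ ∫ φ, ‖(φ : WeakDual 𝕜 X) x‖ ^ p ∂μ :=
      integral_nonneg fun φ => Real.rpow_nonneg (norm_nonneg _) _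
    calc ‖T x‖ = (‖T x‖ ^ p) ^ (1 / p) := by
          rw [← Real.rpow_mul (norm_nonneg _), mul_one_div_cancel hp.ne', Real.rpow_one]
      _ ≤ (C₁ * ∫ φ, ‖(φ : WeakDual 𝕜 X) x‖ ^ p ∂μ) ^ (1 / p) :=
          Real.rpow_le_rpow (Real.rpow_nonneg (norm_nonneg _) _) hTp (by positivity)
      _ = C₁ ^ (1 / p) * (∫ φ, ‖(φ : WeakDual 𝕜 X) x‖ ^ p ∂μ) ^ (1 / p) :=
          Real.mul_rpow hC₁.le hInn
  · -- backward direction: Pietsch domination implies the summing inequality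
    rintro ⟨C, hC, μ, hreg, hprob, hdom⟩
    refine ⟨C ^ p, Real.rpow_pos_of_pos hC p, ?_⟩
    intro m x
    have hintg : ∀ j : Fin m,
        Integrable (fun φ : dualBall 𝕜 X => ‖(φ : WeakDual 𝕜 X) (x j)‖ ^ p) μ :=
      fun j => integrable_cm μ (evalCM p hp (x j))
    have hb : BddAbove (Set.range fun φ : dualBall 𝕜 X =>
        ∑ j, ‖(φ : WeakDual 𝕜 X) (x j)‖ ^ p) := by
      refine ⟨∑ j, ‖x j‖ ^ p, ?_⟩
      rintro r ⟨φ, rfl⟩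
      apply Finset.sum_le_sum
      intro j _
      exact Real.rpow_le_rpow (norm_nonneg _) (norm_eval_le_norm (x j) φ) hp.le
    calc ∑ j, ‖T (x j)‖ ^ p
        ≤ ∑ j, C ^ p * ∫ φ, ‖(φ : WeakDual 𝕜 X) (x j)‖ ^ p ∂μ := by
          apply Finset.sum_le_sum
          intro j _
          have h1 := hdom (x j)
          have hI : 0 ≤ ∫ φ, ‖(φ : WeakDual 𝕜 X) (x j)‖ ^ p ∂μ :=
            integral_nonneg fun φ => Real.rpow_nonneg (norm_nonneg _) _
          have h2 : ‖T (x j)‖ ^ p ≤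
              (C * (∫ φ, ‖(φ : WeakDual 𝕜 X) (x j)‖ ^ p ∂μ) ^ (1 / p)) ^ p :=
            Real.rpow_le_rpow (norm_nonneg _) h1 hp.le
          rwa [Real.mul_rpow hC.le (Real.rpow_nonneg hI _), ← Real.rpow_mul hI,
            one_div_mul_cancel hp.ne', Real.rpow_one] at h2
      _ = C ^ p * ∫ φ, ∑ j, ‖(φ : WeakDual 𝕜 X) (x j)‖ ^ p ∂μ := by
          rw [← Finset.mul_sum, ← integral_finset_sum _ fun j _ => hintg j]
      _ ≤ C ^ p * ⨆ φ : dualBall 𝕜 X, ∑ j, ‖(φ : WeakDual 𝕜 X) (x j)‖ ^ p := by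
          apply mul_le_mul_of_nonneg_left _ (Real.rpow_nonneg hC.le _)
          calc ∫ φ, ∑ j, ‖(φ : WeakDual 𝕜 X) (x j)‖ ^ p ∂μ
              ≤ ∫ _, (⨆ ψ : dualBall 𝕜 X, ∑ j, ‖(ψ : WeakDual 𝕜 X) (x j)‖ ^ p) ∂μ := by
                apply integral_mono (integrable_finset_sum _ fun j _ => hintg j)
                  (integrable_const _)
                intro φ
                exact le_ciSup hb φ
            _ = ⨆ ψ : dualBall 𝕜 X, ∑ j, ‖(ψ : WeakDual 𝕜 X) (x j)‖ ^ p := by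
                simp [integral_const, measure_univ]
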